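/- There exist constants C₁, C₂ > 0 (depending only on κ, λ, ν, μ, α) such that for all real k, l with k ≠ 0, l ≠ 0, k ≠ l, N(k−l,l) ≠ 0 and (k−l)² + l² ≥ 1, one has C₁ ( |k−l|^{1−α}/|l| + |l|^{1−α}/|k−l| ) ≤ |m(k−l,l)| ≤ C₂ ( |k−l|^{1+α}/|l| + |l|^{1+α}/|k−l| ). -/

import Mathlib

/-- The denominator `N(p,q)` of the multiplier of the normal form transformation
of the fractional KdV-BBM equation. -/
noncomputable def fracN (ν α p q : ℝ) : ℝ :=
  (p + q) * (1 + ν * |q| ^ α) * (|p| ^ α - |p + q| ^ α)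
    + q * (1 + ν * |p + q| ^ α) * (|q| ^ α - |p| ^ α)

/-- The multiplier `m(p,q)` of the normal form transformation of the fractional
KdV-BBM equation. -/
noncomputable def fracM (κ μ lam ν α p q : ℝ) : ℝ :=
  lam * (p + q) * (1 + ν * |p| ^ α) * (1 + ν * |q| ^ α) /
    (2 * (κ * ν + μ) * fracN ν α p q)

/-!
Write `f(t) = 1 + ν tᵅ`. Up to sign, `N(p, q)` is a symmetric function of the triple
`(p, q, -(p + q))`, so `|N(p, q)| = |N(u, v)|` where `u, v > 0` are the two smallest of
`|p|, |q|, |p + q|` and `w = u + v` is the largest. For such `u, v`, concavity of `t ↦ tᵅ` in the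
form `α (w - u) wᵅ ≤ w (wᵅ - uᵅ) ≤ (w - u) wᵅ` gives `|N(u, v)| w ≍ u v wᵅ f(w)`, that is
`|N(p, q)| w² ≍ |p| |q| |p + q| wᵅ f(w)`. The bounds on `m` then follow by comparing
`f(|p|) f(|q|)` with `f(w)` and `|p|^(2 ∓ α) + |q|^(2 ∓ α)` with `w^(2 ∓ α)`; the upper bound also
needs `f(w) ≲ w^(2α)`, which holds because `(k - l)² + l² ≥ 1` forces `w ≥ 1/2`.
-/

namespace Real

theorem rpow_sub_rpow_bounds {α u w : ℝ} (hα0 : 0 ≤ α) (hα1 : α ≤ 1) (hu : 0 ≤ u)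
    (huw : u ≤ w) (hw : 0 < w) :
    α * (w - u) * w ^ α ≤ w * (w ^ α - u ^ α) ∧ w * (w ^ α - u ^ α) ≤ (w - u) * w ^ α := by
  set t := u / w
  have ht0 : 0 ≤ t := div_nonneg hu hw.le
  have ht1 : t ≤ 1 := (div_le_one hw).2 huw
  have hu_eq : u = t * w := (div_mul_cancel₀ u hw.ne').symm
  have hut : u ^ α = t ^ α * w ^ α := by rw [hu_eq, mul_rpow ht0 hw.le]
  have hconcave : t ^ α ≤ 1 + α * (t - 1) := by
    simpa using rpow_one_add_le_one_add_mul_self (s := t - 1) (by linarith) hα0 hα1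
  have hself : t ≤ t ^ α := self_le_rpow_of_le_one ht0 ht1 hα1
  have hwα : 0 ≤ w * w ^ α := by positivity
  rw [hut, hu_eq]
  constructor <;> nlinarith [mul_le_mul_of_nonneg_left hconcave hwα,
    mul_le_mul_of_nonneg_left hself hwα]

theorem add_rpow_le_two_rpow_mul_add_rpow {x y p : ℝ} (hx : 0 ≤ x) (hy : 0 ≤ y) (hp : 1 ≤ p) :
    (x + y) ^ p ≤ 2 ^ (p - 1) * (x ^ p + y ^ p) := by
  lift x to NNReal using hx
  lift y to NNReal using hy
  exact_mod_cast NNReal.rpow_add_le_mul_rpow_add_rpow x y hp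

theorem rpow_div_add_rpow_div {x y : ℝ} (hx : x ≠ 0) (hy : y ≠ 0) (γ : ℝ) :
    x ^ γ / y + y ^ γ / x = (x ^ (γ + 1) + y ^ (γ + 1)) / (x * y) := by
  rw [rpow_add_one hx, rpow_add_one hy]
  field_simp

end Real

theorem abs_add_of_mul_pos {a b : ℝ} (h : 0 < a * b) : |a + b| = |a| + |b| := by
  rcases pos_and_pos_or_neg_and_neg_of_mul_pos h with ⟨ha, hb⟩ | ⟨ha, hb⟩
  · exact (abs_add_eq_add_abs_iff a b).2 (Or.inl ⟨ha.le, hb.le⟩)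
  · exact (abs_add_eq_add_abs_iff a b).2 (Or.inr ⟨ha.le, hb.le⟩)

section Weight

variable {ν α : ℝ}

theorem mul_add_rpow_two_sub_le (hν : 0 ≤ ν) (hα0 : 0 ≤ α) (hα1 : α ≤ 1) {x y w P D : ℝ}
    (hx : 0 < x) (hy : 0 < y) (hxw : x ≤ w) (hyw : y ≤ w) (hw : w ≤ x + y) (hP : 0 ≤ P)
    (hD : 0 ≤ D) (h : D * w ^ 2 ≤ 2 * P * w ^ α * (1 + ν * w ^ α)) :
    D * (x ^ (2 - α) + y ^ (2 - α)) ≤ 8 * P * ((1 + ν * x ^ α) * (1 + ν * y ^ α)) := by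
  have hw0 : 0 < w := hx.trans_le hxw
  have hsum : x ^ (2 - α) + y ^ (2 - α) ≤ 2 * w ^ (2 - α) := by
    have hα2 : 0 ≤ 2 - α := by linarith
    linarith [Real.rpow_le_rpow hx.le hxw hα2, Real.rpow_le_rpow hy.le hyw hα2]
  have hweight : 1 + ν * w ^ α ≤ 2 * ((1 + ν * x ^ α) * (1 + ν * y ^ α)) := by
    have hwα : w ^ α ≤ x ^ α + y ^ α :=
      (Real.rpow_le_rpow hw0.le hw hα0).trans (Real.rpow_add_le_add_rpow hx.le hy.le hα0 hα1)
    have hxα : 0 ≤ ν * x ^ α := by positivity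
    have hyα : 0 ≤ ν * y ^ α := by positivity
    nlinarith [mul_nonneg hxα hyα]
  have hww : w ^ α * w ^ (2 - α) = w ^ 2 := by
    rw [← Real.rpow_add hw0, add_sub_cancel, Real.rpow_two]
  refine le_of_mul_le_mul_right ?_ (pow_pos hw0 2)
  calc D * (x ^ (2 - α) + y ^ (2 - α)) * w ^ 2
      ≤ D * w ^ 2 * (2 * w ^ (2 - α)) := by nlinarith [mul_nonneg hD (sq_nonneg w)]
    _ ≤ 2 * P * w ^ α * (1 + ν * w ^ α) * (2 * w ^ (2 - α)) := by gcongr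
    _ = 4 * P * (1 + ν * w ^ α) * w ^ 2 := by rw [← hww]; ring
    _ ≤ 4 * P * (2 * ((1 + ν * x ^ α) * (1 + ν * y ^ α))) * w ^ 2 := by gcongr
    _ = 8 * P * ((1 + ν * x ^ α) * (1 + ν * y ^ α)) * w ^ 2 := by ring

theorem le_mul_add_rpow_two_add (hν : 0 ≤ ν) (hα0 : 0 ≤ α) (hα1 : α ≤ 1) {x y w P D : ℝ}
    (hx : 0 < x) (hy : 0 < y) (hxw : x ≤ w) (hyw : y ≤ w) (hw : w ≤ x + y)
    (hxy : 1 ≤ x ^ 2 + y ^ 2) (hP : 0 ≤ P) (hD : 0 ≤ D)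
    (h : α * P * w ^ α * (1 + ν * w ^ α) ≤ D * w ^ 2) :
    α * P * ((1 + ν * x ^ α) * (1 + ν * y ^ α))
      ≤ 8 * (2 + ν) * D * (x ^ (2 + α) + y ^ (2 + α)) := by
  have hw0 : 0 < w := hx.trans_le hxw
  have hw_half : 1 / 2 ≤ w := by nlinarith
  have hwα : 1 / 2 ≤ w ^ α :=
    (Real.self_le_rpow_of_le_one (by norm_num) (by norm_num) hα1).trans
      (Real.rpow_le_rpow (by norm_num) hw_half hα0)
  have hweight : 1 + ν * w ^ α ≤ 2 * (2 + ν) * (w ^ α) ^ 2 := by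
    nlinarith [mul_nonneg (mul_nonneg hν (Real.rpow_nonneg hw0.le α))
      (by linarith : 0 ≤ 2 * w ^ α - 1)]
  have hF : (1 + ν * x ^ α) * (1 + ν * y ^ α) ≤ (1 + ν * w ^ α) ^ 2 := by
    have hxα := Real.rpow_le_rpow hx.le hxw hα0
    have hyα := Real.rpow_le_rpow hy.le hyw hα0
    rw [sq]
    gcongr
  have hpow : w ^ 2 * w ^ α ≤ 4 * (x ^ (2 + α) + y ^ (2 + α)) := by
    have h2α : (2 : ℝ) ^ (2 + α - 1) ≤ 4 := by
      calc (2 : ℝ) ^ (2 + α - 1) ≤ 2 ^ (2 : ℝ) :=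
            Real.rpow_le_rpow_of_exponent_le one_le_two (by linarith)
        _ = 4 := by norm_num
    calc w ^ 2 * w ^ α = w ^ (2 + α) := by rw [Real.rpow_add hw0, Real.rpow_two]
      _ ≤ (x + y) ^ (2 + α) := Real.rpow_le_rpow hw0.le hw (by linarith)
      _ ≤ 2 ^ (2 + α - 1) * (x ^ (2 + α) + y ^ (2 + α)) :=
          Real.add_rpow_le_two_rpow_mul_add_rpow hx.le hy.le (by linarith)
      _ ≤ 4 * (x ^ (2 + α) + y ^ (2 + α)) := by gcongr
  have hαP : 0 ≤ α * P := mul_nonneg hα0 hP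
  calc α * P * ((1 + ν * x ^ α) * (1 + ν * y ^ α))
      ≤ α * P * (1 + ν * w ^ α) ^ 2 := by gcongr
    _ ≤ α * P * w ^ α * (1 + ν * w ^ α) * (2 * (2 + ν) * w ^ α) := by
        rw [sq]
        nlinarith [mul_le_mul_of_nonneg_left hweight
          (mul_nonneg hαP (by positivity : (0 : ℝ) ≤ 1 + ν * w ^ α))]
    _ ≤ D * w ^ 2 * (2 * (2 + ν) * w ^ α) := by gcongr
    _ = 2 * (2 + ν) * D * (w ^ 2 * w ^ α) := by ring
    _ ≤ 2 * (2 + ν) * D * (4 * (x ^ (2 + α) + y ^ (2 + α))) := by gcongr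
    _ = 8 * (2 + ν) * D * (x ^ (2 + α) + y ^ (2 + α)) := by ring

end Weight

section fracN

variable {ν α : ℝ}

theorem fracN_comm (p q : ℝ) : fracN ν α p q = fracN ν α q p := by
  unfold fracN
  rw [add_comm q p]
  ring

theorem fracN_neg_neg (p q : ℝ) : fracN ν α (-p) (-q) = -fracN ν α p q := by
  unfold fracN
  rw [← neg_add, abs_neg, abs_neg, abs_neg]
  ring

theorem fracN_neg_add (p q : ℝ) : fracN ν α p (-(p + q)) = fracN ν α p q := by
  unfold fracN
  rw [show p + -(p + q) = -q by ring, abs_neg, abs_neg]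
  ring

theorem abs_fracN_abs_abs {p q : ℝ} (h : 0 < p * q) :
    |fracN ν α (|p|) (|q|)| = |fracN ν α p q| := by
  rcases pos_and_pos_or_neg_and_neg_of_mul_pos h with ⟨hp, hq⟩ | ⟨hp, hq⟩
  · rw [abs_of_pos hp, abs_of_pos hq]
  · rw [abs_of_neg hp, abs_of_neg hq, fracN_neg_neg, abs_neg]

theorem abs_fracN_pos_pos_bounds (hν : 0 ≤ ν) (hα0 : 0 ≤ α) (hα1 : α ≤ 1) {u v : ℝ}
    (hu : 0 < u) (hv : 0 < v) :
    α * (u * v) * (u + v) ^ α * (1 + ν * (u + v) ^ α) ≤ |fracN ν α u v| * (u + v) ∧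
      |fracN ν α u v| * (u + v) ≤ 2 * (u * v) * (u + v) ^ α * (1 + ν * (u + v) ^ α) := by
  set w := u + v
  have hw : 0 < w := add_pos hu hv
  have huw : u ≤ w := by linarith
  have hvw : v ≤ w := by linarith
  have hfu : 0 ≤ u * (1 + ν * v ^ α) := by positivity
  have hfv : 0 ≤ v * (1 + ν * u ^ α) := by positivity
  obtain ⟨hu_lo, hu_hi⟩ := Real.rpow_sub_rpow_bounds hα0 hα1 hu.le huw hw
  obtain ⟨hv_lo, hv_hi⟩ := Real.rpow_sub_rpow_bounds hα0 hα1 hv.le hvw hw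
  have hN : |fracN ν α u v|
      = u * (1 + ν * v ^ α) * (w ^ α - u ^ α) + v * (1 + ν * u ^ α) * (w ^ α - v ^ α) := by
    have hUw : u ^ α ≤ w ^ α := Real.rpow_le_rpow hu.le huw hα0
    have hVw : v ^ α ≤ w ^ α := Real.rpow_le_rpow hv.le hvw hα0
    rw [← abs_of_nonneg (add_nonneg (mul_nonneg hfu (sub_nonneg.2 hUw))
      (mul_nonneg hfv (sub_nonneg.2 hVw))), ← abs_neg]
    unfold fracN
    rw [abs_of_pos hu, abs_of_pos hv, abs_of_pos hw]
    congr 1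
    ring
  have hf_le : 1 + ν * w ^ α ≤ (1 + ν * u ^ α) + (1 + ν * v ^ α) := by
    nlinarith [Real.rpow_add_le_add_rpow hu.le hv.le hα0 hα1, Real.rpow_nonneg hu.le α]
  have hf_ge : (1 + ν * u ^ α) + (1 + ν * v ^ α) ≤ 2 * (1 + ν * w ^ α) := by
    nlinarith [Real.rpow_le_rpow hu.le huw hα0, Real.rpow_le_rpow hv.le hvw hα0]
  have hW : 0 ≤ u * v * w ^ α := by positivity
  rw [hN]
  constructor
  · calc α * (u * v) * w ^ α * (1 + ν * w ^ α)
        ≤ α * (u * v) * w ^ α * ((1 + ν * u ^ α) + (1 + ν * v ^ α)) := by gcongr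
      _ = u * (1 + ν * v ^ α) * (α * (w - u) * w ^ α)
          + v * (1 + ν * u ^ α) * (α * (w - v) * w ^ α) := by ring
      _ ≤ u * (1 + ν * v ^ α) * (w * (w ^ α - u ^ α))
          + v * (1 + ν * u ^ α) * (w * (w ^ α - v ^ α)) := by gcongr
      _ = _ := by ring
  · calc (u * (1 + ν * v ^ α) * (w ^ α - u ^ α) + v * (1 + ν * u ^ α) * (w ^ α - v ^ α)) * w
        = u * (1 + ν * v ^ α) * (w * (w ^ α - u ^ α))
          + v * (1 + ν * u ^ α) * (w * (w ^ α - v ^ α)) := by ring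
      _ ≤ u * (1 + ν * v ^ α) * ((w - u) * w ^ α)
          + v * (1 + ν * u ^ α) * ((w - v) * w ^ α) := by gcongr
      _ = u * v * w ^ α * ((1 + ν * u ^ α) + (1 + ν * v ^ α)) := by ring
      _ ≤ u * v * w ^ α * (2 * (1 + ν * w ^ α)) := by gcongr
      _ = _ := by ring

theorem exists_abs_fracN_eq_pos_pos {p q : ℝ} (hp : p ≠ 0) (hq : q ≠ 0) (hpq : p + q ≠ 0) :
    ∃ u v, 0 < u ∧ 0 < v ∧ |fracN ν α p q| = |fracN ν α u v| ∧
      u * v * (u + v) = |p| * |q| * |p + q| ∧ |p| ≤ u + v ∧ |q| ≤ u + v ∧ u + v ≤ |p| + |q| := by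
  have hp' := abs_pos.2 hp
  have hq' := abs_pos.2 hq
  have hpq' := abs_pos.2 hpq
  by_cases hpq_pos : 0 < p * q
  · refine ⟨|p|, |q|, hp', hq', (abs_fracN_abs_abs hpq_pos).symm, ?_⟩
    rw [abs_add_of_mul_pos hpq_pos]
    exact ⟨rfl, by linarith, by linarith, le_rfl⟩
  by_cases hps_pos : 0 < p * -(p + q)
  · have hs := abs_add_of_mul_pos hps_pos
    rw [show p + -(p + q) = -q by ring, abs_neg, abs_neg] at hs
    refine ⟨|p|, |p + q|, hp', hpq', ?_, ?_⟩
    · rw [← fracN_neg_add p q, ← abs_fracN_abs_abs hps_pos, abs_neg]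
    rw [← hs]
    exact ⟨by ring, by linarith, le_rfl, by linarith⟩
  -- `q` and `-(p + q)` both have the sign opposite to `p`.
  have hqs_pos : 0 < q * -(q + p) := by
    have h1 : p * q < 0 := lt_of_le_of_ne (not_lt.1 hpq_pos) (mul_ne_zero hp hq)
    have h2 : p * -(p + q) < 0 :=
      lt_of_le_of_ne (not_lt.1 hps_pos) (mul_ne_zero hp (neg_ne_zero.2 hpq))
    have hp2 : 0 < p ^ 2 := by positivity
    exact pos_of_mul_pos_right (a := p ^ 2)
      (by linear_combination mul_pos_of_neg_of_neg h1 h2) hp2.le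
  have hs := abs_add_of_mul_pos hqs_pos
  rw [show q + -(q + p) = -p by ring, abs_neg, abs_neg, add_comm q p] at hs
  refine ⟨|q|, |p + q|, hq', hpq', ?_, ?_⟩
  · rw [fracN_comm, ← fracN_neg_add q p, ← abs_fracN_abs_abs hqs_pos, abs_neg, add_comm q p]
  rw [← hs]
  exact ⟨by ring, le_rfl, by linarith, by linarith⟩

theorem abs_fracN_bounds (hν : 0 ≤ ν) (hα0 : 0 ≤ α) (hα1 : α ≤ 1) {p q : ℝ} (hp : p ≠ 0)
    (hq : q ≠ 0) (hpq : p + q ≠ 0) (hpq1 : 1 ≤ p ^ 2 + q ^ 2) :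
    |fracN ν α p q| * (|p| ^ (2 - α) + |q| ^ (2 - α))
        ≤ 8 * (|p| * |q| * |p + q|) * ((1 + ν * |p| ^ α) * (1 + ν * |q| ^ α)) ∧
      α * (|p| * |q| * |p + q|) * ((1 + ν * |p| ^ α) * (1 + ν * |q| ^ α))
        ≤ 8 * (2 + ν) * |fracN ν α p q| * (|p| ^ (2 + α) + |q| ^ (2 + α)) := by
  obtain ⟨u, v, hu, hv, hN, hprod, hpw, hqw, hw⟩ :=
    exists_abs_fracN_eq_pos_pos (ν := ν) (α := α) hp hq hpq
  obtain ⟨hlo, hhi⟩ := abs_fracN_pos_pos_bounds hν hα0 hα1 hu hv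
  rw [← hN] at hlo hhi
  have hP : 0 ≤ |p| * |q| * |p + q| := by positivity
  have hxy : 1 ≤ |p| ^ 2 + |q| ^ 2 := by simpa only [sq_abs] using hpq1
  have huv : 0 ≤ u + v := by positivity
  refine ⟨mul_add_rpow_two_sub_le hν hα0 hα1 (abs_pos.2 hp) (abs_pos.2 hq) hpw hqw hw hP
    (abs_nonneg _) ?_, le_mul_add_rpow_two_add hν hα0 hα1 (abs_pos.2 hp) (abs_pos.2 hq) hpw hqw
    hw hxy hP (abs_nonneg _) ?_⟩
  · rw [← hprod]
    calc |fracN ν α p q| * (u + v) ^ 2 = |fracN ν α p q| * (u + v) * (u + v) := by ring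
      _ ≤ 2 * (u * v) * (u + v) ^ α * (1 + ν * (u + v) ^ α) * (u + v) := by gcongr
      _ = _ := by ring
  · rw [← hprod]
    calc α * (u * v * (u + v)) * (u + v) ^ α * (1 + ν * (u + v) ^ α)
        = α * (u * v) * (u + v) ^ α * (1 + ν * (u + v) ^ α) * (u + v) := by ring
      _ ≤ |fracN ν α p q| * (u + v) * (u + v) := by gcongr
      _ = _ := by ring

end fracN

theorem abs_fracM {lam ν : ℝ} (κ μ α p q : ℝ) (hlam : 0 ≤ lam) (hν : 0 ≤ ν) :
    |fracM κ μ lam ν α p q| = lam * |p + q| * ((1 + ν * |p| ^ α) * (1 + ν * |q| ^ α))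
      / (2 * |κ * ν + μ| * |fracN ν α p q|) := by
  have hfp : 0 ≤ 1 + ν * |p| ^ α := by positivity
  have hfq : 0 ≤ 1 + ν * |q| ^ α := by positivity
  rw [fracM, abs_div, abs_mul, abs_mul, abs_mul, abs_mul, abs_mul, abs_of_nonneg hlam,
    abs_of_nonneg hfp, abs_of_nonneg hfq, abs_two, mul_assoc (lam * |p + q|)]

/-- high-frequency bounds on the multiplier: there are `C₁, C₂ > 0` such that
for all `k, l` with `k ≠ 0`, `l ≠ 0`, `k ≠ l`, `N(k−l,l) ≠ 0` and `(k−l)² + l² ≥ 1`,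
`C₁(|k−l|^{1−α}/|l| + |l|^{1−α}/|k−l|) ≤ |m(k−l,l)| ≤ C₂(|k−l|^{1+α}/|l| + |l|^{1+α}/|k−l|)`. -/
theorem fracM_high_frequency_bounds (κ μ lam ν α : ℝ) (hlam : 0 < lam) (hν : 0 < ν)
    (hκνμ : κ * ν + μ ≠ 0) (hα : α ∈ Set.Ioo (0 : ℝ) 1) :
    ∃ C₁ C₂ : ℝ, 0 < C₁ ∧ 0 < C₂ ∧
      ∀ k l : ℝ, k ≠ 0 → l ≠ 0 → k ≠ l → fracN ν α (k - l) l ≠ 0 →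
        1 ≤ (k - l) ^ 2 + l ^ 2 →
        C₁ * (|k - l| ^ (1 - α) / |l| + |l| ^ (1 - α) / |k - l|)
            ≤ |fracM κ μ lam ν α (k - l) l| ∧
          |fracM κ μ lam ν α (k - l) l|
            ≤ C₂ * (|k - l| ^ (1 + α) / |l| + |l| ^ (1 + α) / |k - l|) := by
  obtain ⟨hα0, hα1⟩ := hα
  have hK : 0 < |κ * ν + μ| := abs_pos.2 hκνμ
  refine ⟨lam / (16 * |κ * ν + μ|), 4 * (2 + ν) * lam / (α * |κ * ν + μ|), by positivity,
    by positivity, fun k l hk hl hkl hN hkl1 => ?_⟩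
  have hp : k - l ≠ 0 := sub_ne_zero.2 hkl
  obtain ⟨hupper, hlower⟩ :=
    abs_fracN_bounds hν.le hα0.le hα1.le hp hl (by rwa [sub_add_cancel]) hkl1
  have hX := abs_pos.2 hp
  have hY := abs_pos.2 hl
  have hD := abs_pos.2 hN
  rw [abs_fracM κ μ α _ _ hlam.le hν.le, Real.rpow_div_add_rpow_div hX.ne' hY.ne',
    Real.rpow_div_add_rpow_div hX.ne' hY.ne', show 1 - α + 1 = 2 - α by ring,
    show 1 + α + 1 = 2 + α by ring, ← mul_div_assoc, ← mul_div_assoc,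
    div_le_div_iff₀ (by positivity) (by positivity),
    div_le_div_iff₀ (by positivity) (by positivity)]
  set K := |κ * ν + μ|
  set D := |fracN ν α (k - l) l|
  set P := |k - l| * |l| * |k - l + l|
  set F := (1 + ν * |k - l| ^ α) * (1 + ν * |l| ^ α)
  constructor
  · calc _ = lam / 8 * (D * (|k - l| ^ (2 - α) + |l| ^ (2 - α))) := by field_simp; ring
      _ ≤ lam / 8 * (8 * P * F) := by gcongr
      _ = _ := by ring
  · calc _ = lam / α * (α * P * F) := by field_simp; ring
      _ ≤ lam / α * (8 * (2 + ν) * D * (|k - l| ^ (2 + α) + |l| ^ (2 + α))) := by gcongr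
      _ = _ := by field_simp; ring
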